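/- Assume (F0) and (F5), and fix t ∈ [0,T]. Let v : ℝ → X be bounded and differentiable with v̇ ∈ L²(ℝ, X), and suppose ∫_{-∞}^{+∞} ‖∇ₓF(t, v(s))‖² ds < +∞. Then the limits v_* := lim_{s→−∞} v(s) and v^* := lim_{s→+∞} v(s) exist and v_*, v^* ∈ C(t), i.e. ∇ₓF(t, v_*) = ∇ₓF(t, v^*) = 0. If in addition v̇ is (weakly) differentiable with v̈ ∈ L²(ℝ, X), then also lim_{s→±∞} v̇(s) = 0. -/

import Mathlib

/-!
Along the curve, `s ↦ ‖∇ₓF(t, v s)‖²` is integrable and uniformly continuous (`v` is uniformly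
continuous since `‖v b - v a‖ ≤ ∫ₐᵇ ‖v'‖ ≤ c (b - a) + ‖v'‖₂² / c` for every `c > 0`), so by
Barbălat's lemma it tends to `0`. Hence every cluster point of the bounded curve at `±∞` is a
critical point. Two distinct cluster points are impossible: the continuous curve would pass
infinitely often through a small sphere around one of them, producing a critical point on that
sphere, against isolatedness. For the derivative, `‖v'‖²` and its derivative `2 ⟪v', v''⟫` are
integrable, so `‖v'‖²` tends to `0`.
-/

open Set Filter Topology MeasureTheory
open scoped RealInnerProductSpace

lemma tendsto_zero_of_tendsto_norm_sq {α E : Type*} [SeminormedAddCommGroup E] {l : Filter α}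
    {f : α → E} (h : Tendsto (fun a => ‖f a‖ ^ 2) l (𝓝 0)) : Tendsto f l (𝓝 0) := by
  rw [tendsto_zero_iff_norm_tendsto_zero]
  simpa [Real.sqrt_sq (norm_nonneg _)] using h.sqrt

lemma Continuous.frequently_atTop_eq {f : ℝ → ℝ} (hf : Continuous f) {c : ℝ}
    (hle : ∃ᶠ s in atTop, f s ≤ c) (hge : ∃ᶠ s in atTop, c ≤ f s) :
    ∃ᶠ s in atTop, f s = c := by
  rw [frequently_atTop] at *
  intro N
  obtain ⟨a, hNa, ha⟩ := hle N
  obtain ⟨b, hab, hb⟩ := hge a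
  obtain ⟨s, hs, hfs⟩ := intermediate_value_Icc hab hf.continuousOn ⟨ha, hb⟩
  exact ⟨s, hNa.trans hs.1, hfs⟩

section ClusterPoints

variable {X : Type*} [MetricSpace X] {v : ℝ → X} {K Z : Set X}

lemma eq_of_mapClusterPt_atTop_of_isolated (hv : Continuous v) (hK : IsCompact K)
    (hvK : ∀ s, v s ∈ K) (hZ : ∀ x, MapClusterPt x atTop v → x ∈ Z)
    (hiso : ∀ x ∈ Z, ∃ r > (0 : ℝ), ∀ y ∈ Z, y ∈ Metric.ball x r → y = x)
    {p q : X} (hp : MapClusterPt p atTop v) (hq : MapClusterPt q atTop v) : q = p := by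
  by_contra hqp
  obtain ⟨r, hr, hpr⟩ := hiso p (hZ p hp)
  set ρ := min r (dist q p)
  have hρ : 0 < ρ := lt_min hr (dist_pos.2 hqp)
  have hρr : ρ ≤ r := min_le_left _ _
  have hρq : ρ ≤ dist q p := min_le_right _ _
  have near_p : ∃ᶠ s in atTop, dist (v s) p ≤ ρ / 2 :=
    mapClusterPt_iff_frequently.1 hp _ (Metric.closedBall_mem_nhds p (half_pos hρ))
  have far_from_p : ∃ᶠ s in atTop, ρ / 2 ≤ dist (v s) p := by
    refine (mapClusterPt_iff_frequently.1 hq _ (Metric.ball_mem_nhds q (half_pos hρ))).mono ?_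
    intro s hs
    linarith [Metric.mem_ball.1 hs, dist_triangle_left q p (v s)]
  have on_sphere : ∃ᶠ s in atTop, v s ∈ Metric.sphere p (ρ / 2) ∩ K :=
    ((hv.dist continuous_const).frequently_atTop_eq near_p far_from_p).mono
      fun s hs => ⟨hs, hvK s⟩
  obtain ⟨w, ⟨hw, -⟩, hwv⟩ :=
    (hK.inter_left Metric.isClosed_sphere).exists_mapClusterPt_of_frequently on_sphere
  have hwp : w = p := hpr w (hZ w hwv) (by rw [Metric.mem_ball, Metric.mem_sphere.1 hw]; linarith)
  rw [hwp, Metric.mem_sphere, dist_self] at hw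
  linarith

lemma exists_tendsto_atTop_of_isolated (hv : Continuous v) (hK : IsCompact K)
    (hvK : ∀ s, v s ∈ K) (hZ : ∀ x, MapClusterPt x atTop v → x ∈ Z)
    (hiso : ∀ x ∈ Z, ∃ r > (0 : ℝ), ∀ y ∈ Z, y ∈ Metric.ball x r → y = x) :
    ∃ p ∈ Z, Tendsto v atTop (𝓝 p) := by
  obtain ⟨p, -, hp⟩ := hK.exists_mapClusterPt_of_frequently (l := atTop) (.of_forall hvK)
  exact ⟨p, hZ p hp, hK.tendsto_nhds_of_unique_mapClusterPt (Eventually.of_forall hvK)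
    fun q _ hq => eq_of_mapClusterPt_atTop_of_isolated hv hK hvK hZ hiso hp hq⟩

end ClusterPoints

theorem tendsto_atTop_zero_of_uniformContinuous_of_integrable {g : ℝ → ℝ}
    (hg : UniformContinuous g) (hg0 : ∀ s, 0 ≤ g s) (hint : Integrable g) :
    Tendsto g atTop (𝓝 0) := by
  refine tendsto_order.2 ⟨fun a ha => Eventually.of_forall fun s => ha.trans_le (hg0 s),
    fun ε hε => ?_⟩
  by_contra hfreq
  rw [not_eventually] at hfreq
  obtain ⟨δ, hδ, hgδ⟩ := Metric.uniformContinuous_iff.1 hg (ε / 2) (half_pos hε)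
  have window_to_zero : Tendsto (fun s => ∫ x in s..s + δ / 2, g x) atTop (𝓝 0) := by
    have hlim := intervalIntegral_tendsto_integral_Ioi 0 hint.integrableOn tendsto_id
    have := (hlim.comp (tendsto_atTop_add_const_right atTop (δ / 2) tendsto_id)).sub hlim
    simpa only [sub_self, Function.comp_def, id,
      intervalIntegral.integral_interval_sub_left hint.intervalIntegrable
        hint.intervalIntegrable] using this
  have window_lower : ∀ s, ε ≤ g s → δ / 2 * (ε / 2) ≤ ∫ x in s..s + δ / 2, g x := by
    intro s hs
    calc δ / 2 * (ε / 2) = ∫ _ in s..s + δ / 2, ε / 2 := by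
          rw [intervalIntegral.integral_const, smul_eq_mul]; ring
      _ ≤ ∫ x in s..s + δ / 2, g x := by
        refine intervalIntegral.integral_mono_on (by linarith) intervalIntegrable_const
          hint.intervalIntegrable fun x hx => ?_
        have hxs : dist x s < δ := by
          rw [Real.dist_eq, abs_of_nonneg (by linarith [hx.1])]
          linarith [hx.2]
        linarith [(abs_lt.1 (Real.dist_eq _ _ ▸ hgδ hxs)).1]
  obtain ⟨s, hs, hsmall⟩ := (hfreq.and_eventually
    (window_to_zero.eventually (gt_mem_nhds (by positivity : 0 < δ / 2 * (ε / 2))))).exists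
  exact hsmall.not_ge (window_lower s (not_lt.1 hs))

section Curves

variable {E : Type*} [NormedAddCommGroup E] [NormedSpace ℝ E] [CompleteSpace E] {v v' : ℝ → E}

lemma aestronglyMeasurable_of_forall_hasDerivAt (hv : ∀ s, HasDerivAt v (v' s) s)
    (μ : Measure ℝ) : AEStronglyMeasurable v' μ := by
  rw [show v' = deriv v from funext fun s => (hv s).deriv.symm]
  exact aestronglyMeasurable_deriv v μ

lemma norm_sub_le_of_integrable_norm_sq_deriv (hv : ∀ s, HasDerivAt v (v' s) s)
    (hv' : Integrable fun s => ‖v' s‖ ^ 2) {c : ℝ} (hc : 0 < c) {a b : ℝ} (hab : a ≤ b) :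
    ‖v b - v a‖ ≤ c * (b - a) + (∫ s, ‖v' s‖ ^ 2) / c := by
  have amgm : ∀ s, ‖v' s‖ ≤ c + ‖v' s‖ ^ 2 / c := fun s => by
    rw [← sub_nonneg, show c + ‖v' s‖ ^ 2 / c - ‖v' s‖
      = ((‖v' s‖ - c / 2) ^ 2 + 3 * c ^ 2 / 4) / c by field_simp; ring]
    positivity
  have hbound : IntervalIntegrable (fun s => c + ‖v' s‖ ^ 2 / c) volume a b :=
    intervalIntegrable_const.add (hv'.intervalIntegrable.div_const c)
  have hv'int : IntervalIntegrable v' volume a b :=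
    hbound.mono_fun' (aestronglyMeasurable_of_forall_hasDerivAt hv _)
      (Eventually.of_forall amgm)
  calc ‖v b - v a‖ = ‖∫ s in a..b, v' s‖ := by
        rw [intervalIntegral.integral_eq_sub_of_hasDerivAt (fun s _ => hv s) hv'int]
    _ ≤ ∫ s in a..b, (c + ‖v' s‖ ^ 2 / c) :=
        intervalIntegral.norm_integral_le_of_norm_le hab
          (Eventually.of_forall fun s _ => amgm s) hbound
    _ = c * (b - a) + (∫ s in a..b, ‖v' s‖ ^ 2) / c := by
        rw [intervalIntegral.integral_add intervalIntegrable_const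
          (hv'.intervalIntegrable.div_const c), intervalIntegral.integral_const,
          intervalIntegral.integral_div, smul_eq_mul]
        ring
    _ ≤ c * (b - a) + (∫ s, ‖v' s‖ ^ 2) / c := by
        gcongr
        rw [intervalIntegral.integral_of_le hab]
        exact setIntegral_le_integral hv' (Eventually.of_forall fun s => sq_nonneg _)

lemma uniformContinuous_of_integrable_norm_sq_deriv (hv : ∀ s, HasDerivAt v (v' s) s)
    (hv' : Integrable fun s => ‖v' s‖ ^ 2) : UniformContinuous v := by
  set K := ∫ s, ‖v' s‖ ^ 2
  have hK : 0 ≤ K := integral_nonneg fun s => sq_nonneg _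
  rw [Metric.uniformContinuous_iff]
  intro ε hε
  -- `c` is chosen so that the constant term `K / c` is below `ε / 2`
  set c := 2 * (K + 1) / ε
  have hc : 0 < c := by positivity
  refine ⟨ε / (2 * c), by positivity, fun {a b} hab => ?_⟩
  wlog hle : a ≤ b generalizing a b
  · rw [dist_comm] at hab ⊢
    exact this hab (le_of_not_ge hle)
  have hKc : K / c < ε / 2 := by
    rw [div_lt_iff₀ hc, show ε / 2 * c = K + 1 by simp only [c]; field_simp]
    linarith
  have hba : c * (b - a) < ε / 2 := by
    rw [Real.dist_eq, abs_sub_comm, abs_of_nonneg (by linarith)] at hab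
    calc c * (b - a) < c * (ε / (2 * c)) := by gcongr
      _ = ε / 2 := by field_simp
  rw [dist_comm, dist_eq_norm]
  linarith [norm_sub_le_of_integrable_norm_sq_deriv hv hv' hc hle]

end Curves

lemma ContDiff.continuous_of_hasGradientAt {X : Type*} [NormedAddCommGroup X]
    [InnerProductSpace ℝ X] [CompleteSpace X] {f : X → ℝ} {g : X → X} (hf : ContDiff ℝ 1 f)
    (hg : ∀ x, HasGradientAt f (g x) x) : Continuous g := by
  rw [show g = gradient f from funext fun x => (hg x).gradient.symm]
  exact (InnerProductSpace.toDual ℝ X).symm.continuous.comp (hf.continuous_fderiv one_ne_zero)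

section CriticalLimits

variable {X Y : Type*} [NormedAddCommGroup X] [NormedSpace ℝ X] [ProperSpace X]
  [NormedAddCommGroup Y] {g : X → Y} {v v' : ℝ → X} {M : ℝ}

theorem exists_tendsto_atTop_of_integrable_norm_sq (hg : Continuous g)
    (hiso : ∀ x, g x = 0 → ∃ r > (0 : ℝ), ∀ y, g y = 0 → y ∈ Metric.ball x r → y = x)
    (hv : ∀ s, HasDerivAt v (v' s) s) (hbdd : ∀ s, ‖v s‖ ≤ M)
    (hv' : Integrable fun s => ‖v' s‖ ^ 2) (hgv : Integrable fun s => ‖g (v s)‖ ^ 2) :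
    ∃ p, Tendsto v atTop (𝓝 p) ∧ g p = 0 := by
  have hvK : ∀ s, v s ∈ Metric.closedBall 0 M := fun s => mem_closedBall_zero_iff.2 (hbdd s)
  have hK := isCompact_closedBall (0 : X) M
  have hgv_uc : UniformContinuous fun s => ‖g (v s)‖ ^ 2 :=
    uniformContinuousOn_univ.1 <|
      (hK.uniformContinuousOn_of_continuous (hg.norm.pow 2).continuousOn).comp
        (uniformContinuousOn_univ.2 (uniformContinuous_of_integrable_norm_sq_deriv hv hv'))
        fun s _ => hvK s
  have hgv0 : Tendsto (fun s => g (v s)) atTop (𝓝 0) := tendsto_zero_of_tendsto_norm_sq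
    (tendsto_atTop_zero_of_uniformContinuous_of_integrable hgv_uc (fun _ => sq_nonneg _) hgv)
  obtain ⟨p, hp, hvp⟩ := exists_tendsto_atTop_of_isolated (Z := {x | g x = 0})
    (continuous_iff_continuousAt.2 fun s => (hv s).continuousAt) hK hvK
    (fun x hx => eq_of_nhds_neBot (ClusterPt.mono (hx.continuousAt_comp hg.continuousAt) hgv0)) hiso
  exact ⟨p, hvp, hp⟩

theorem exists_tendsto_atBot_of_integrable_norm_sq (hg : Continuous g)
    (hiso : ∀ x, g x = 0 → ∃ r > (0 : ℝ), ∀ y, g y = 0 → y ∈ Metric.ball x r → y = x)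
    (hv : ∀ s, HasDerivAt v (v' s) s) (hbdd : ∀ s, ‖v s‖ ≤ M)
    (hv' : Integrable fun s => ‖v' s‖ ^ 2) (hgv : Integrable fun s => ‖g (v s)‖ ^ 2) :
    ∃ p, Tendsto v atBot (𝓝 p) ∧ g p = 0 := by
  have hw : ∀ s, HasDerivAt (fun s => v (-s)) (-v' (-s)) s := fun s => by
    simpa [Function.comp_def] using (hv (-s)).scomp s (hasDerivAt_neg s)
  obtain ⟨p, hp, hgp⟩ := exists_tendsto_atTop_of_integrable_norm_sq hg hiso hw
    (fun s => hbdd (-s)) (by simpa using hv'.comp_neg) hgv.comp_neg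
  exact ⟨p, by simpa [Function.comp_def] using hp.comp tendsto_neg_atBot_atTop, hgp⟩

end CriticalLimits

theorem tendsto_zero_of_integrable_norm_sq_of_deriv {E : Type*} [NormedAddCommGroup E]
    [InnerProductSpace ℝ E] [CompleteSpace E] {f f' : ℝ → E} (hf : ∀ s, HasDerivAt f (f' s) s)
    (hf2 : Integrable fun s => ‖f s‖ ^ 2) (hf'2 : Integrable fun s => ‖f' s‖ ^ 2) :
    Tendsto f atBot (𝓝 0) ∧ Tendsto f atTop (𝓝 0) := by
  have hderiv : ∀ s, HasDerivAt (‖f ·‖ ^ 2) (2 * ⟪f s, f' s⟫) s := fun s => (hf s).norm_sq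
  have hint : Integrable fun s => 2 * ⟪f s, f' s⟫ := by
    refine (hf2.add hf'2).mono' ((continuous_iff_continuousAt.2 fun s => (hf s).continuousAt)
      |>.aestronglyMeasurable.inner (aestronglyMeasurable_of_forall_hasDerivAt hf _)
      |>.const_mul 2) (Eventually.of_forall fun s => ?_)
    rw [Pi.add_apply, Real.norm_eq_abs, abs_mul, abs_two]
    nlinarith [abs_real_inner_le_norm (f s) (f' s), sq_nonneg (‖f s‖ - ‖f' s‖)]
  exact ⟨tendsto_zero_of_tendsto_norm_sq <| tendsto_zero_of_hasDerivAt_of_integrableOn_Iic (a := 0)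
      (fun s _ => hderiv s) hint.integrableOn hf2.integrableOn,
    tendsto_zero_of_tendsto_norm_sq <| tendsto_zero_of_hasDerivAt_of_integrableOn_Ioi (a := 0)
      (fun s _ => hderiv s) hint.integrableOn hf2.integrableOn⟩

theorem limits_at_infinity
    {X : Type*} [NormedAddCommGroup X] [InnerProductSpace ℝ X] [FiniteDimensional ℝ X]
    (T : ℝ)
    (F : ℝ → X → ℝ) (gradF : ℝ → X → X)
    -- (F0)
    (hF0 : ContDiffOn ℝ 1 (fun p : ℝ × X => F p.1 p.2) (Set.Icc 0 T ×ˢ Set.univ))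
    (hgradF : ∀ t ∈ Set.Icc 0 T, ∀ x : X, HasGradientAt (F t) (gradF t x) x)
    -- (F5)
    (hF5 : ∀ t ∈ Set.Icc 0 T, ∀ x : X, gradF t x = 0 →
      ∃ r > (0 : ℝ), ∀ y : X, gradF t y = 0 → y ∈ Metric.ball x r → y = x)
    (t : ℝ) (ht : t ∈ Set.Icc 0 T)
    -- v is bounded and differentiable with derivative v' ∈ L²(ℝ,X)
    (v v' : ℝ → X)
    (hv : ∀ s : ℝ, HasDerivAt v (v' s) s)
    (M : ℝ) (hbdd : ∀ s : ℝ, ‖v s‖ ≤ M)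
    (hv'L2 : MeasureTheory.Integrable (fun s => ‖v' s‖ ^ 2))
    (hgradL2 : MeasureTheory.Integrable (fun s => ‖gradF t (v s)‖ ^ 2)) :
    (∃ vm vp : X,
      Filter.Tendsto v Filter.atBot (𝓝 vm) ∧ Filter.Tendsto v Filter.atTop (𝓝 vp) ∧
      gradF t vm = 0 ∧ gradF t vp = 0) ∧
    (∀ v'' : ℝ → X, (∀ s : ℝ, HasDerivAt v' (v'' s) s) →
      MeasureTheory.Integrable (fun s => ‖v'' s‖ ^ 2) →
      Filter.Tendsto v' Filter.atBot (𝓝 0) ∧ Filter.Tendsto v' Filter.atTop (𝓝 0)) := by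
  have hFt : ContDiff ℝ 1 (F t) := contDiffOn_univ.1 <|
    hF0.comp (contDiff_const.prodMk contDiff_id).contDiffOn fun x _ => ⟨ht, mem_univ x⟩
  have hgrad : Continuous (gradF t) := hFt.continuous_of_hasGradientAt (hgradF t ht)
  obtain ⟨vm, hvm, hvm0⟩ :=
    exists_tendsto_atBot_of_integrable_norm_sq hgrad (hF5 t ht) hv hbdd hv'L2 hgradL2
  obtain ⟨vp, hvp, hvp0⟩ :=
    exists_tendsto_atTop_of_integrable_norm_sq hgrad (hF5 t ht) hv hbdd hv'L2 hgradL2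
  exact ⟨⟨vm, vp, hvm, hvp, hvm0, hvp0⟩,
    fun _ hv'' hv''L2 => tendsto_zero_of_integrable_norm_sq_of_deriv hv'' hv'L2 hv''L2⟩
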